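/- arXiv:1403.5721 — 2 statements merged into one kernel-verified Lean document; each statement's English description precedes it below -/
import Mathlib

section
/- Let h : ℕ → ℕ be a nondecreasing unbounded function (an order function) such that for every real d > 0 the series ∑_{x=0}^∞ 2^{-d·h(x)} diverges. Then for every real c > 0 there exists n > 0 with h(⌈2^{c·n}⌉) ≤ n. -/
/-!
If `h ⌈2 ^ (c n)⌉ > n` for every `n > 0`, then monotonicity spreads this to all large `x`:
taking `n = ⌊log₂ x / c⌋` gives `h x ≥ n + 1 > log₂ x / c`, i.e. `x < 2 ^ (c h x)`.
Hence `2 ^ (-2 c h x) ≤ x ^ (-2)` eventually, and the series with `d = 2c` converges.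
-/

open Filter

lemma lt_two_rpow_mul_of_lt_apply_ceil {h : ℕ → ℕ} (hmono : Monotone h) {c : ℝ} (hc : 0 < c)
    (hgrow : ∀ n : ℕ, 0 < n → n < h ⌈(2:ℝ) ^ (c * n)⌉₊) {x : ℕ} (hx : (2:ℝ) ^ c ≤ x) :
    (x:ℝ) < 2 ^ (c * h x) := by
  have hx0 : (0:ℝ) < x := (Real.rpow_pos_of_pos two_pos c).trans_le hx
  have hcL : c ≤ Real.logb 2 x := (Real.le_logb_iff_rpow_le one_lt_two hx0).mpr hx
  set n := ⌊Real.logb 2 x / c⌋₊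
  have hn : 0 < n := Nat.floor_pos.mpr ((one_le_div hc).mpr hcL)
  have hcn : c * n ≤ Real.logb 2 x :=
    (le_div_iff₀' hc).mp (Nat.floor_le (div_nonneg (hc.le.trans hcL) hc.le))
  have hpow : (2:ℝ) ^ (c * n) ≤ x := (Real.le_logb_iff_rpow_le one_lt_two hx0).mp hcn
  have hhx : n + 1 ≤ h x := (hgrow n hn).trans_le (hmono (Nat.ceil_le.mpr hpow))
  have hL : Real.logb 2 x < c * h x :=
    calc Real.logb 2 x < c * (n + 1) := (div_lt_iff₀' hc).mp (Nat.lt_floor_add_one _)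
      _ ≤ c * h x := by gcongr; exact_mod_cast hhx
  exact (Real.logb_lt_iff_lt_rpow one_lt_two hx0).mp hL

theorem stmt_0_general (h : ℕ → ℕ) (hmono : Monotone h)
    (hdiv : ∀ d : ℝ, 0 < d → ¬ Summable (fun x : ℕ => (2:ℝ) ^ (-(d * h x)))) :
    ∀ c : ℝ, 0 < c → ∃ n : ℕ, 0 < n ∧ h ⌈(2:ℝ) ^ (c * n)⌉₊ ≤ n := by
  intro c hc
  by_contra! hgrow
  refine hdiv (2 * c) (by positivity) <| .of_norm_bounded_eventually_nat
    (Real.summable_nat_rpow.mpr (by norm_num : (-2:ℝ) < -1)) ?_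
  filter_upwards [eventually_ge_atTop ⌈(2:ℝ) ^ c⌉₊] with x hx
  have hcx : (2:ℝ) ^ c ≤ x := Nat.ceil_le.mp hx
  have hx0 : (0:ℝ) < x := (Real.rpow_pos_of_pos two_pos c).trans_le hcx
  have hlt := lt_two_rpow_mul_of_lt_apply_ceil hmono hc hgrow hcx
  calc ‖(2:ℝ) ^ (-(2 * c * h x))‖ = ((2:ℝ) ^ (c * h x)) ^ (-2:ℝ) := by
        rw [Real.norm_of_nonneg (by positivity), ← Real.rpow_mul zero_le_two]
        ring_nf
    _ ≤ (x:ℝ) ^ (-2:ℝ) := Real.rpow_le_rpow_of_nonpos hx0 hlt.le (by norm_num)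

theorem stmt_0 (h : ℕ → ℕ) (hmono : Monotone h) (hunb : ∀ m : ℕ, ∃ n, m < h n)
    (hdiv : ∀ d : ℝ, 0 < d → ¬ Summable (fun x : ℕ => (2:ℝ) ^ (-(d * h x)))) :
    ∀ c : ℝ, 0 < c → ∃ n : ℕ, 0 < n ∧ h ⌈(2:ℝ) ^ (c * n)⌉₊ ≤ n :=
  stmt_0_general h hmono hdiv
end

section
/- Let f : ℝ → ℝ be nondecreasing, let z ∈ I ∩ J where I = [k·2^{-m}, (k+1)·2^{-m}] and J = [p·2^{-m} + 1/3, (p+1)·2^{-m} + 1/3] for integers k, p and m ≥ 1. Suppose z ∈ L for a closed interval L of length d with 2^{-m}/3 ≥ d ≥ 2^{-m-1}/3. Then S(L)/12 ≤ max(S(I), S(J)), where S(K) denotes the slope of f over the interval K. -/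
/-!
The intervals `I = [k 2⁻ᵐ, (k+1) 2⁻ᵐ]` and `J = [p 2⁻ᵐ, (p+1) 2⁻ᵐ] + 1/3` have the same length
`h = 2⁻ᵐ`, and their left endpoints differ by `(3(p - k) + 2ᵐ) / (3 · 2ᵐ)`, whose numerator is a
nonzero integer because `3 ∤ 2ᵐ`; so they are at least `h / 3 ≥ |L|` apart. Hence `L`, which
meets `I ∩ J`, lies in `I ∪ J`, and by monotonicity the increment of `f` over `L` is at most the
sum of its increments over `I` and `J`. Dividing by `|L| ≥ h / 6` gives the constant `12`.
-/

/-- Slope of `f` over the interval `[a, b]`. -/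
noncomputable def slope' (f : ℝ → ℝ) (a b : ℝ) : ℝ := (f b - f a) / (b - a)

theorem Monotone.sub_le_sub_add_sub_of_le {f : ℝ → ℝ} (hf : Monotone f) {a a' b b' u v : ℝ}
    (hau : a ≤ u) (hvb : v ≤ b') (hba : b ≤ a') :
    f v - f u ≤ (f a' - f a) + (f b' - f b) := by
  have : f a ≤ f u := hf hau
  have : f v ≤ f b' := hf hvb
  have : f b ≤ f a' := hf hba
  linarith

theorem Monotone.sub_le_sub_add_sub_of_mem_inter {f : ℝ → ℝ} (hf : Monotone f) {a b h u d z : ℝ}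
    (hzI : z ∈ Set.Icc a (a + h)) (hzJ : z ∈ Set.Icc b (b + h)) (hzL : z ∈ Set.Icc u (u + d))
    (hd : d ≤ |b - a|) :
    f (u + d) - f u ≤ (f (a + h) - f a) + (f (b + h) - f b) := by
  wlog hab : a ≤ b generalizing a b
  · exact (this hzJ hzI (by rwa [abs_sub_comm]) (by linarith)).trans_eq (add_comm _ _)
  rw [abs_of_nonneg (sub_nonneg.2 hab)] at hd
  obtain ⟨-, hza⟩ := hzI
  obtain ⟨hbz, -⟩ := hzJ
  obtain ⟨huz, hzu⟩ := hzL
  exact hf.sub_le_sub_add_sub_of_le (by linarith) (by linarith) (by linarith)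

theorem three_mul_add_two_pow_ne_zero (n : ℤ) (m : ℕ) : 3 * n + 2 ^ m ≠ 0 := by
  intro h
  have h3 : (3 : ℤ) ∣ 2 ^ m := ⟨-n, by linarith⟩
  have := Int.prime_three.dvd_of_dvd_pow h3
  omega

theorem zpow_neg_div_three_le_abs_dist (k p : ℤ) (m : ℕ) :
    (2 : ℝ) ^ (-(m : ℤ)) / 3 ≤ |((p : ℝ) * 2 ^ (-(m : ℤ)) + 1 / 3) - (k : ℝ) * 2 ^ (-(m : ℤ))| := by
  have h2m : (0 : ℝ) < 2 ^ m := by positivity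
  have hN : (1 : ℝ) ≤ |((3 * (p - k) + 2 ^ m : ℤ) : ℝ)| := by
    rw [← Int.cast_abs]
    exact_mod_cast Int.one_le_abs (three_mul_add_two_pow_ne_zero (p - k) m)
  have hdist : ((p : ℝ) * 2 ^ (-(m : ℤ)) + 1 / 3) - (k : ℝ) * 2 ^ (-(m : ℤ)) =
      ((3 * (p - k) + 2 ^ m : ℤ) : ℝ) / (3 * 2 ^ m) := by
    rw [zpow_neg, zpow_natCast]
    push_cast
    field_simp
    ring
  rw [hdist, abs_div, abs_of_pos (by positivity : (0 : ℝ) < 3 * 2 ^ m), zpow_neg, zpow_natCast,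
    div_le_div_iff₀ (by positivity) (by positivity)]
  calc ((2 : ℝ) ^ m)⁻¹ * (3 * 2 ^ m) = 1 * 3 := by field_simp
    _ ≤ _ := by gcongr

theorem div_div_twelve_le_max_div {w x y d h : ℝ} (hw : 0 ≤ w) (hwxy : w ≤ x + y) (hh : 0 < h)
    (hhd : h ≤ 6 * d) :
    w / d / 12 ≤ max (x / h) (y / h) := by
  have hx := le_max_left (x / h) (y / h)
  have hy := le_max_right (x / h) (y / h)
  calc w / d / 12 = w / (12 * d) := by ring
    _ ≤ w / (2 * h) := div_le_div_of_nonneg_left hw (by positivity) (by linarith)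
    _ ≤ (x + y) / (2 * h) := by gcongr
    _ = (x / h + y / h) / 2 := by field_simp
    _ ≤ max (x / h) (y / h) := by linarith

theorem stmt_4_general (f : ℝ → ℝ) (hf : Monotone f) (k p : ℤ) (m : ℕ)
    (z u d : ℝ)
    (hzI : z ∈ Set.Icc ((k : ℝ) * 2 ^ (-(m : ℤ))) (((k : ℝ) + 1) * 2 ^ (-(m : ℤ))))
    (hzJ : z ∈ Set.Icc ((p : ℝ) * 2 ^ (-(m : ℤ)) + 1 / 3)
            (((p : ℝ) + 1) * 2 ^ (-(m : ℤ)) + 1 / 3))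
    (hzL : z ∈ Set.Icc u (u + d))
    (hd₁ : d ≤ (2 : ℝ) ^ (-(m : ℤ)) / 3) (hd₂ : (2 : ℝ) ^ (-(m : ℤ) - 1) / 3 ≤ d) :
    slope' f u (u + d) / 12 ≤
      max (slope' f ((k : ℝ) * 2 ^ (-(m : ℤ))) (((k : ℝ) + 1) * 2 ^ (-(m : ℤ))))
        (slope' f ((p : ℝ) * 2 ^ (-(m : ℤ)) + 1 / 3)
          (((p : ℝ) + 1) * 2 ^ (-(m : ℤ)) + 1 / 3)) := by
  have hdist := zpow_neg_div_three_le_abs_dist k p m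
  set h : ℝ := 2 ^ (-(m : ℤ)) with h_def
  have hh : 0 < h := by positivity
  have hhd : h ≤ 6 * d := by
    rw [zpow_sub₀ two_ne_zero, zpow_one] at hd₂
    linarith
  set a := (k : ℝ) * h
  set b := (p : ℝ) * h + 1 / 3
  have ha : ((k : ℝ) + 1) * h = a + h := by ring
  have hb : ((p : ℝ) + 1) * h + 1 / 3 = b + h := by ring
  rw [ha] at hzI
  rw [hb] at hzJ
  have hL := hf.sub_le_sub_add_sub_of_mem_inter hzI hzJ hzL (hd₁.trans hdist)
  simp only [slope', ha, hb, add_sub_cancel_left]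
  exact div_div_twelve_le_max_div (sub_nonneg.2 (hf (by linarith [hzL.1, hzL.2]))) hL hh hhd

theorem stmt_4 (f : ℝ → ℝ) (hf : Monotone f) (k p : ℤ) (m : ℕ) (hm : 1 ≤ m)
    (z u d : ℝ)
    (hzI : z ∈ Set.Icc ((k : ℝ) * 2 ^ (-(m : ℤ))) (((k : ℝ) + 1) * 2 ^ (-(m : ℤ))))
    (hzJ : z ∈ Set.Icc ((p : ℝ) * 2 ^ (-(m : ℤ)) + 1 / 3)
            (((p : ℝ) + 1) * 2 ^ (-(m : ℤ)) + 1 / 3))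
    (hzL : z ∈ Set.Icc u (u + d))
    (hd₁ : d ≤ (2 : ℝ) ^ (-(m : ℤ)) / 3) (hd₂ : (2 : ℝ) ^ (-(m : ℤ) - 1) / 3 ≤ d) :
    slope' f u (u + d) / 12 ≤
      max (slope' f ((k : ℝ) * 2 ^ (-(m : ℤ))) (((k : ℝ) + 1) * 2 ^ (-(m : ℤ))))
        (slope' f ((p : ℝ) * 2 ^ (-(m : ℤ)) + 1 / 3)
          (((p : ℝ) + 1) * 2 ^ (-(m : ℤ)) + 1 / 3)) :=
  stmt_4_general f hf k p m z u d hzI hzJ hzL hd₁ hd₂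
end
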